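/- Within a single u-segment of an execution of Algorithm RSP, the sequence of rules executed by a non-root process u is a word of the regular language (R_I + ε)(R_R + ε) R_C* (R_EB + ε)(R_EF + ε). -/

import Mathlib

open Classical

inductive RStatus : Type
  | I | C | EB | EF
deriving DecidableEq

inductive RRule : Type
  | RC | REB | REF | RI | RR
deriving DecidableEq

/-- A network: a finite simple graph with a distinguished root and
strictly positive symmetric edge weights. -/
structure Network (V : Type) [Fintype V] [DecidableEq V] where
  G : SimpleGraph V
  r : V
  w : V → V → ℝ
  w_symm : ∀ u v : V, w u v = w v u
  w_pos : ∀ u v : V, G.Adj u v → 0 < w u v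

/-- A configuration: each process has a status, a parent pointer and a distance value. -/
structure Config (V : Type) where
  st : V → RStatus
  par : V → V
  d : V → ℝ

variable {V : Type} [Fintype V] [DecidableEq V]

/-- The root's variables are constants: status C and distance 0. -/
def RootConst (N : Network V) (γ : Config V) : Prop :=
  γ.st N.r = RStatus.C ∧ γ.d N.r = 0

/-- v ∈ children(u). -/
def childOf (N : Network V) (γ : Config V) (u v : V) : Prop :=
  N.G.Adj u v ∧ γ.st u ≠ RStatus.I ∧ γ.st v ≠ RStatus.I ∧ γ.par v = u ∧
    γ.d v ≥ γ.d u + N.w v u ∧ (γ.st v = γ.st u ∨ γ.st u = RStatus.EB)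

/-- u is an abnormal root. -/
def abRoot (N : Network V) (γ : Config V) (u : V) : Prop :=
  u ≠ N.r ∧ γ.st u ≠ RStatus.I ∧
    (¬ N.G.Adj u (γ.par u) ∨ γ.st (γ.par u) = RStatus.I ∨
     γ.d u < γ.d (γ.par u) + N.w u (γ.par u) ∨
     (γ.st u ≠ γ.st (γ.par u) ∧ γ.st (γ.par u) ≠ RStatus.EB))

def PReset (N : Network V) (γ : Config V) (u : V) : Prop :=
  γ.st u = RStatus.EF ∧ abRoot N γ u

def PCorrection (N : Network V) (γ : Config V) (u : V) : Prop :=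
  ∃ v : V, N.G.Adj u v ∧ γ.st v = RStatus.C ∧ γ.d v + N.w u v < γ.d u

def guardRC (N : Network V) (γ : Config V) (u : V) : Prop :=
  u ≠ N.r ∧ γ.st u = RStatus.C ∧ PCorrection N γ u

def guardREB (N : Network V) (γ : Config V) (u : V) : Prop :=
  u ≠ N.r ∧ γ.st u = RStatus.C ∧ ¬ PCorrection N γ u ∧
    (abRoot N γ u ∨ γ.st (γ.par u) = RStatus.EB)

def guardREF (N : Network V) (γ : Config V) (u : V) : Prop :=
  u ≠ N.r ∧ γ.st u = RStatus.EB ∧ ∀ v : V, childOf N γ u v → γ.st v = RStatus.EF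

def guardRI (N : Network V) (γ : Config V) (u : V) : Prop :=
  u ≠ N.r ∧ PReset N γ u ∧ ∀ v : V, N.G.Adj u v → γ.st v ≠ RStatus.C

def guardRR (N : Network V) (γ : Config V) (u : V) : Prop :=
  u ≠ N.r ∧ (PReset N γ u ∨ γ.st u = RStatus.I) ∧
    ∃ v : V, N.G.Adj u v ∧ γ.st v = RStatus.C

/-- The effect of the macro computePath at u in the step γ → γ'. -/
def ComputePath (N : Network V) (γ γ' : Config V) (u : V) : Prop :=
  N.G.Adj u (γ'.par u) ∧ γ.st (γ'.par u) = RStatus.C ∧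
  (∀ v : V, N.G.Adj u v → γ.st v = RStatus.C →
      γ.d (γ'.par u) + N.w u (γ'.par u) ≤ γ.d v + N.w u v) ∧
  γ'.d u = γ.d (γ'.par u) + N.w u (γ'.par u) ∧ γ'.st u = RStatus.C

/-- u executes the given rule during the step γ → γ'. -/
def ExecRule (N : Network V) (γ γ' : Config V) (u : V) : RRule → Prop
  | RRule.RC => guardRC N γ u ∧ ComputePath N γ γ' u
  | RRule.REB => guardREB N γ u ∧ γ'.st u = RStatus.EB ∧ γ'.par u = γ.par u ∧ γ'.d u = γ.d u
  | RRule.REF => guardREF N γ u ∧ γ'.st u = RStatus.EF ∧ γ'.par u = γ.par u ∧ γ'.d u = γ.d u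
  | RRule.RI => guardRI N γ u ∧ γ'.st u = RStatus.I ∧ γ'.par u = γ.par u ∧ γ'.d u = γ.d u
  | RRule.RR => guardRR N γ u ∧ ComputePath N γ γ' u

def EnabledAt (N : Network V) (γ : Config V) (u : V) : Prop :=
  guardRC N γ u ∨ guardREB N γ u ∨ guardREF N γ u ∨ guardRI N γ u ∨ guardRR N γ u

/-- A step of the distributed (unfair) daemon: a nonempty set of enabled processes
each atomically executes one of its enabled rules; other processes are unchanged. -/
def Step (N : Network V) (γ γ' : Config V) : Prop :=
  ∃ S : Set V, S.Nonempty ∧ (∀ u ∈ S, ∃ ρ : RRule, ExecRule N γ γ' u ρ) ∧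
    ∀ u : V, u ∉ S → γ'.st u = γ.st u ∧ γ'.par u = γ.par u ∧ γ'.d u = γ.d u

def Terminal (N : Network V) (γ : Config V) : Prop :=
  ∀ u : V, ¬ EnabledAt N γ u

/-- Weight of a walk. -/
noncomputable def walkWeight (N : Network V) {u v : V} (p : N.G.Walk u v) : ℝ :=
  (p.darts.map (fun e => N.w e.toProd.1 e.toProd.2)).sum

/-- x is the weighted distance from u to v in the graph. -/
def IsWDistBetween (N : Network V) (u v : V) (x : ℝ) : Prop :=
  (∃ p : N.G.Walk u v, walkWeight N p = x) ∧ ∀ p : N.G.Walk u v, x ≤ walkWeight N p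

/-- x is the weighted distance d(u,r). -/
def IsWDist (N : Network V) (u : V) (x : ℝ) : Prop :=
  IsWDistBetween N u N.r x

/-- k is the hop-distance between u and v: the minimum number of edges
of a minimum-weight path from u to v. -/
def IsHopDist (N : Network V) (u v : V) (k : ℕ) : Prop :=
  (∃ p : N.G.Walk u v, p.length = k ∧ ∀ q : N.G.Walk u v, walkWeight N p ≤ walkWeight N q) ∧
  (∀ p : N.G.Walk u v, (∀ q : N.G.Walk u v, walkWeight N p ≤ walkWeight N q) → k ≤ p.length)

/-- Legitimate state of a process. -/
def LegitState (N : Network V) (γ : Config V) (u : V) : Prop :=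
  u = N.r ∨
  (N.G.Reachable u N.r ∧ γ.st u = RStatus.C ∧ IsWDist N u (γ.d u) ∧
     N.G.Adj u (γ.par u) ∧ γ.d u = γ.d (γ.par u) + N.w u (γ.par u)) ∨
  (¬ N.G.Reachable u N.r ∧ γ.st u = RStatus.I)

def Legitimate (N : Network V) (γ : Config V) : Prop :=
  ∀ u : V, LegitState N γ u

/-- An execution: an infinite sequence of configurations (stuttering once terminal),
all respecting the root constants, consecutive ones related by steps. -/
def IsExec (N : Network V) (e : ℕ → Config V) : Prop :=
  (∀ i : ℕ, RootConst N (e i)) ∧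
  ∀ i : ℕ, Step N (e i) (e (i+1)) ∨ (Terminal N (e i) ∧ e (i+1) = e i)

/-- u executes some rule at step j of execution e. -/
def ExecAt (N : Network V) (e : ℕ → Config V) (j : ℕ) (u : V) : Prop :=
  ∃ ρ : RRule, ExecRule N (e j) (e (j+1)) u ρ

/-- u executes computePath (rule R_C or R_R) at step j. -/
def CPExec (N : Network V) (e : ℕ → Config V) (j : ℕ) (u : V) : Prop :=
  ExecRule N (e j) (e (j+1)) u RRule.RC ∨ ExecRule N (e j) (e (j+1)) u RRule.RR

def AliveAbRoot (N : Network V) (γ : Config V) (u : V) : Prop :=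
  abRoot N γ u ∧ γ.st u ≠ RStatus.EF

/-- Step j is a u-segment break: some non-root process of V_u ceases to be
an alive abnormal root during step j. -/
def SegBreak (N : Network V) (e : ℕ → Config V) (u : V) (j : ℕ) : Prop :=
  ∃ v : V, v ≠ N.r ∧ N.G.Reachable v u ∧
    AliveAbRoot N (e j) v ∧ ¬ AliveAbRoot N (e (j+1)) v

/-- n_maxCC: the maximum number of non-root processes in a connected component. -/
noncomputable def nmaxCC (N : Network V) : ℕ :=
  sSup {k : ℕ | ∃ v : V, k = {x : V | x ≠ N.r ∧ N.G.Reachable x v}.ncard}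

/-- The interval of steps [s, t) is a u-segment of the execution e
(t = ⊤ encodes a final, unbroken segment). -/
def IsSegment (N : Network V) (e : ℕ → Config V) (u : V) (s : ℕ) (t : ℕ∞) : Prop :=
  (s : ℕ∞) < t ∧ (s = 0 ∨ SegBreak N e u (s-1)) ∧
  (∀ j : ℕ, s ≤ j → ((j : ℕ∞) + 1 < t) → ¬ SegBreak N e u j) ∧
  (∀ m : ℕ, t = (m : ℕ∞) → SegBreak N e u (m-1))

/-- A causal chain of k+1 actions a_1,…,a_{k+1} in the window [s,t):
a_{i} occurs at time τ i, is a computePath execution by process p (i+1)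
setting its parent to p i; a_1 occurs no later than any action of p 0,
and each a_{i+1} occurs after a_i but no later than the next action of a_i's executor. -/
structure IsCausalChain (N : Network V) (e : ℕ → Config V) (s : ℕ) (t : ℕ∞)
    (k : ℕ) (τ : Fin (k+1) → ℕ) (p : Fin (k+2) → V) : Prop where
  mono : StrictMono τ
  lb : ∀ i : Fin (k+1), s ≤ τ i
  ub : ∀ i : Fin (k+1), (τ i : ℕ∞) < t
  cp : ∀ i : Fin (k+1), CPExec N e (τ i) (p i.succ) ∧ (e (τ i + 1)).par (p i.succ) = p i.castSucc
  root_first : ∀ j : ℕ, s ≤ j → j < τ 0 → ¬ ExecAt N e j (p 0)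
  between : ∀ i : Fin k, ∀ j : ℕ, τ i.castSucc < j → j < τ i.succ →
      ¬ ExecAt N e j (p i.castSucc.succ)

/-- A maximal causal chain: a causal chain that cannot be extended by a further action. -/
def IsMaxCausalChain (N : Network V) (e : ℕ → Config V) (s : ℕ) (t : ℕ∞)
    (k : ℕ) (τ : Fin (k+1) → ℕ) (p : Fin (k+2) → V) : Prop :=
  IsCausalChain N e s t k τ p ∧
  ¬ ∃ (j : ℕ) (v : V), τ (Fin.last k) < j ∧ (j : ℕ∞) < t ∧ CPExec N e j v ∧
      (e (j+1)).par v = p (Fin.last (k+1)) ∧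
      ∀ j' : ℕ, τ (Fin.last k) < j' → j' < j → ¬ ExecAt N e j' (p (Fin.last (k+1)))

/-- S_{seg,v}: the set of distance values produced by actions of maximal
causal chains rooted at v of the segment [s,t). -/
def SSeg (N : Network V) (e : ℕ → Config V) (s : ℕ) (t : ℕ∞) (v : V) : Set ℝ :=
  {x : ℝ | ∃ (k : ℕ) (τ : Fin (k+1) → ℕ) (p : Fin (k+2) → V),
      IsMaxCausalChain N e s t k τ p ∧ p 0 = v ∧
      ∃ i : Fin (k+1), x = (e (τ i + 1)).d (p i.succ)}

def Neutralized (N : Network V) (e : ℕ → Config V) (j : ℕ) (u : V) : Prop :=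
  EnabledAt N (e j) u ∧ ¬ EnabledAt N (e (j+1)) u

/-- Every process enabled at time s executes or is neutralized before time t. -/
def CompletesRound (N : Network V) (e : ℕ → Config V) (s t : ℕ) : Prop :=
  s ≤ t ∧ ∀ u : V, EnabledAt N (e s) u →
    ∃ j : ℕ, s ≤ j ∧ j < t ∧ (ExecAt N e j u ∨ Neutralized N e j u)

/-- roundEnd e k: the time at which the k-th round ends (the beginning of round k+1). -/
noncomputable def roundEnd (N : Network V) (e : ℕ → Config V) : ℕ → ℕ
  | 0 => 0
  | k+1 => sInf {t : ℕ | CompletesRound N e (roundEnd N e k) t}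

/-- b 0, b 1, …, b k is a branch: b 0 is the root r or an abnormal root,
and each b (i+1) is a child of b i; b i is at depth i+1. -/
def IsBranch (N : Network V) (γ : Config V) (k : ℕ) (b : Fin (k+1) → V) : Prop :=
  (b 0 = N.r ∨ abRoot N γ (b 0)) ∧ ∀ i : Fin k, childOf N γ (b i.castSucc) (b i.succ)

/-- Membership in the regular language (R_I + ε)(R_R + ε)R_C*(R_EB + ε)(R_EF + ε). -/
def InRSPLang (l : List RRule) : Prop :=
  ∃ a b c d f : List RRule, l = a ++ b ++ c ++ d ++ f ∧
    (a = [] ∨ a = [RRule.RI]) ∧ (b = [] ∨ b = [RRule.RR]) ∧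
    (∀ x ∈ c, x = RRule.RC) ∧ (d = [] ∨ d = [RRule.REB]) ∧ (f = [] ∨ f = [RRule.REF])

/-! Each rule requires a status of u and sets one, so two successive rules of u respect the
order R_I < R_R < R_C < R_EB < R_EF (only R_C repeating), except that R_EF is followed by
R_I or R_R. That never happens inside a segment: a process of u's component that executes
R_EF either is an abnormal root, which then dies and ends the segment, or is a child of an EB
parent which must itself execute R_EF and then act again, and the argument descends to it. -/

namespace RRule

/-- Position of a rule in the word (R_I + ε)(R_R + ε)R_C*(R_EB + ε)(R_EF + ε). -/
def rank : RRule → ℕ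
  | RI => 0
  | RR => 1
  | RC => 2
  | REB => 3
  | REF => 4

def Before (a b : RRule) : Prop := a.rank < b.rank ∨ (a = RC ∧ b = RC)

instance : DecidableRel Before := fun a b => by unfold Before; infer_instance

theorem Before.trans {a b c : RRule} : Before a b → Before b c → Before a c := by
  cases a <;> cases b <;> cases c <;> decide

end RRule

open RRule

theorem forall_mem_eq_of_eq_nil_or_eq_singleton {α : Type*} {X : List α} {r : α}
    (h : X = [] ∨ X = [r]) : ∀ y ∈ X, y = r := by
  rcases h with rfl | rfl <;> simp

theorem inRSPLang_cons {x : RRule} {l : List RRule} (hl : InRSPLang l)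
    (hx : ∀ y ∈ l, Before x y) : InRSPLang (x :: l) := by
  obtain ⟨a, b, c, d, f, rfl, ha, hb, hc, hd, hf⟩ := hl
  have empty {X : List RRule} {r : RRule} (hX : ∀ y ∈ X, y = r) (hXl : X ⊆ a ++ b ++ c ++ d ++ f)
      (hr : ¬ Before x r) : X = [] :=
    List.eq_nil_iff_forall_not_mem.2 fun y hy => hr (hX y hy ▸ hx y (hXl hy))
  have ha' := empty (forall_mem_eq_of_eq_nil_or_eq_singleton ha) (fun _ hy => by simp [hy])
  have hb' := empty (forall_mem_eq_of_eq_nil_or_eq_singleton hb) (fun _ hy => by simp [hy])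
  have hc' := empty hc (fun _ hy => by simp [hy])
  have hd' := empty (forall_mem_eq_of_eq_nil_or_eq_singleton hd) (fun _ hy => by simp [hy])
  have hf' := empty (forall_mem_eq_of_eq_nil_or_eq_singleton hf) (fun _ hy => by simp [hy])
  cases x
  · refine ⟨[], [], RC :: c, d, f, ?_, .inl rfl, .inl rfl, ?_, hd, hf⟩
    · simp [ha' (by decide), hb' (by decide)]
    · simpa using hc
  · exact ⟨[], [], [], [REB], f, by simp [ha' (by decide), hb' (by decide), hc' (by decide),
      hd' (by decide)], .inl rfl, .inl rfl, by simp, .inr rfl, hf⟩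
  · exact ⟨[], [], [], [], [REF], by simp [ha' (by decide), hb' (by decide), hc' (by decide),
      hd' (by decide), hf' (by decide)], .inl rfl, .inl rfl, by simp, .inl rfl, .inr rfl⟩
  · exact ⟨[RI], b, c, d, f, by simp [ha' (by decide)], .inr rfl, hb, hc, hd, hf⟩
  · exact ⟨[], [RR], c, d, f, by simp [ha' (by decide), hb' (by decide)], .inl rfl, .inr rfl,
      hc, hd, hf⟩

theorem inRSPLang_of_pairwise {l : List RRule} (hl : l.Pairwise Before) : InRSPLang l := by
  induction l with
  | nil => exact ⟨[], [], [], [], [], rfl, .inl rfl, .inl rfl, by simp, .inl rfl, .inl rfl⟩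
  | cons x l ih =>
    rw [List.pairwise_cons] at hl
    exact inRSPLang_cons (ih hl.2) hl.1

def RRule.postSt : RRule → RStatus
  | RC => RStatus.C
  | REB => RStatus.EB
  | REF => RStatus.EF
  | RI => RStatus.I
  | RR => RStatus.C

def RStatus.Permits : RStatus → RRule → Prop
  | RStatus.C, r => r = RC ∨ r = REB
  | RStatus.EB, r => r = REF
  | RStatus.EF, r => r = RI ∨ r = RR
  | RStatus.I, r => r = RR

instance : ∀ σ : RStatus, DecidablePred σ.Permits := by
  intro σ; cases σ <;> unfold RStatus.Permits <;> infer_instance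

theorem RRule.before_of_permits {r r' : RRule} (hr : r ≠ REF) (h : r.postSt.Permits r') :
    Before r r' := by
  revert hr h; cases r <;> cases r' <;> decide

section Execution

variable {N : Network V} {γ γ' : Config V} {x : V}

theorem ExecRule.st_post {r : RRule} (h : ExecRule N γ γ' x r) : γ'.st x = r.postSt := by
  cases r
  exacts [h.2.2.2.2.2, h.2.1, h.2.1, h.2.1, h.2.2.2.2.2]

theorem ExecRule.permits {r : RRule} (h : ExecRule N γ γ' x r) : (γ.st x).Permits r := by
  cases r
  · simp [h.1.2.1, RStatus.Permits]
  · simp [h.1.2.1, RStatus.Permits]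
  · simp [h.1.2.1, RStatus.Permits]
  · simp [h.1.2.1.1, RStatus.Permits]
  · rcases h.1.2.1 with ⟨h, -⟩ | h <;> simp [h, RStatus.Permits]

theorem ExecRule.abRoot_of_st_eq_EF {r : RRule} (h : ExecRule N γ γ' x r)
    (hst : γ.st x = RStatus.EF) : abRoot N γ x := by
  have hp := h.permits
  rw [hst] at hp
  rcases hp with rfl | rfl
  · exact h.1.2.1.2
  · exact h.1.2.1.resolve_right (by simp [hst]) |>.2

theorem childOf_par_of_not_abRoot (hx : x ≠ N.r) (hI : γ.st x ≠ RStatus.I)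
    (hab : ¬ abRoot N γ x) : childOf N γ (γ.par x) x := by
  simp only [abRoot, not_and, not_or, not_lt, not_not] at hab
  obtain ⟨hadj, hparI, hd, hst⟩ := hab hx hI
  exact ⟨hadj.symm, hparI, hI, rfl, hd, by tauto⟩

theorem not_abRoot_of_childOf_par (h : childOf N γ (γ.par x) x) : ¬ abRoot N γ x := by
  obtain ⟨hadj, hparI, -, -, hd, hst⟩ := h
  rintro ⟨-, -, hadj' | hI | hlt | ⟨hne, hEB⟩⟩
  · exact hadj' hadj.symm
  · exact hparI hI
  · exact (not_lt.2 hd) hlt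
  · exact hst.elim hne hEB

def Idle (N : Network V) (e : ℕ → Config V) (x : V) (a b : ℕ) : Prop :=
  ∀ n, a ≤ n → n < b → ¬ ExecAt N e n x

section Segment

variable {N : Network V} {e : ℕ → Config V} {x u : V} {s : ℕ} {t : ℕ∞}

theorem IsExec.vars_eq_of_idle (he : IsExec N e) {a b : ℕ} (hab : a ≤ b)
    (h : Idle N e x a b) :
    (e b).st x = (e a).st x ∧ (e b).par x = (e a).par x ∧ (e b).d x = (e a).d x := by
  induction b, hab using Nat.le_induction with
  | base => exact ⟨rfl, rfl, rfl⟩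
  | succ b hab ih =>
    have hstep : (e (b+1)).st x = (e b).st x ∧ (e (b+1)).par x = (e b).par x ∧
        (e (b+1)).d x = (e b).d x := by
      rcases he.2 b with ⟨S, -, hSexec, hSfix⟩ | ⟨-, heq⟩
      · exact hSfix x fun hxS => h b hab (by omega) (hSexec x hxS)
      · simp [heq]
    obtain ⟨h1, h2, h3⟩ := ih fun n h1 h2 => h n h1 (by omega)
    exact ⟨hstep.1.trans h1, hstep.2.1.trans h2, hstep.2.2.trans h3⟩

theorem idle_or_exists_first_execAt (N : Network V) (e : ℕ → Config V) (x : V) (a b : ℕ) :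
    Idle N e x a b ∨ ∃ k, a ≤ k ∧ k < b ∧ ExecAt N e k x ∧ Idle N e x a k := by
  by_cases h : ∃ n, a ≤ n ∧ n < b ∧ ExecAt N e n x
  · obtain ⟨hak, hkb, hk⟩ := Nat.find_spec h
    exact .inr ⟨Nat.find h, hak, hkb, hk, fun n han hnk hn => Nat.find_min h hnk ⟨han, by omega, hn⟩⟩
  · exact .inl fun n han hnb hn => h ⟨n, han, hnb, hn⟩

theorem IsSegment.aliveAbRoot_succ (hseg : IsSegment N e u s t) (hx : x ≠ N.r)
    (hxu : N.G.Reachable x u) {j : ℕ} (hsj : s ≤ j) (hjt : (j : ℕ∞) + 1 < t)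
    (h : AliveAbRoot N (e j) x) : AliveAbRoot N (e (j+1)) x :=
  by_contra fun h' => hseg.2.2.1 j hsj hjt ⟨x, hx, hxu, h, h'⟩

/-- An abnormal root executing R_EF would end the segment. Otherwise x is an EB-child of p,
and x, now of status EF, is enabled again only as an abnormal root. For that p must leave EB
by R_EF (strictly after x did, since x was not EF) and then execute once more: recurse on p. -/
theorem IsSegment.not_execAt_of_execRule_REF (he : IsExec N e) (hseg : IsSegment N e u s t)
    {x : V} {j j' : ℕ} (hxu : N.G.Reachable x u) (hsj : s ≤ j) (hjj' : j < j') (hj't : (j' : ℕ∞) < t)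
    (href : ExecRule N (e j) (e (j+1)) x RRule.REF) : ¬ ExecAt N e j' x := by
  intro hexec'
  obtain ⟨⟨hxr, hstEB, -⟩, hst1, hpar1, hd1⟩ := href
  have hab : ¬ abRoot N (e j) x := fun hab =>
    (hseg.aliveAbRoot_succ hxr hxu hsj (lt_of_le_of_lt (by exact_mod_cast hjj') hj't)
      ⟨hab, by simp [hstEB]⟩).2 hst1
  set p := (e j).par x
  have hchild : childOf N (e j) p x := childOf_par_of_not_abRoot hxr (by simp [hstEB]) hab
  have hpEB : (e j).st p = RStatus.EB := by
    rcases hchild.2.2.2.2.2 with h | h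
    · rw [← h, hstEB]
    · exact h
  obtain hidle | ⟨j2, hj2, hj2', ⟨r2, hr2⟩, hidle2⟩ :=
    idle_or_exists_first_execAt N e x (j+1) (j'+1)
  · exact hidle j' (by omega) (by omega) hexec'
  obtain ⟨hx2st, hx2par, hx2d⟩ := he.vars_eq_of_idle hj2 hidle2
  have hab2 : abRoot N (e j2) x := hr2.abRoot_of_st_eq_EF (hx2st.trans hst1)
  -- x is still a child of p at time j2 unless p has executed in between
  have hchild2 {n : ℕ} (hjn : j ≤ n) (hnj2 : n ≤ j2) (hidle : Idle N e p n j2)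
      (hd : (e n).d p = (e j).d p) (hst : (e n).st p = RStatus.EB ∨ (e n).st p = RStatus.EF) :
      False := by
    obtain ⟨hp2st, -, hp2d⟩ := he.vars_eq_of_idle hnj2 hidle
    refine not_abRoot_of_childOf_par ?_ hab2
    rw [hx2par, hpar1]
    refine ⟨hchild.1, ?_, by simp [hx2st, hst1], hx2par.trans hpar1, ?_, ?_⟩
    · rcases hst with h | h <;> simp [hp2st, h]
    · rw [hx2d, hd1, hp2d, hd]; exact hchild.2.2.2.2.1
    · rcases hst with h | h <;> simp [hp2st, h, hx2st, hst1]
  obtain hpidle | ⟨k, hjk, hkj2, ⟨r, hr⟩, hpidle⟩ := idle_or_exists_first_execAt N e p j j2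
  · exact hchild2 le_rfl (by omega) hpidle rfl (.inl hpEB)
  obtain ⟨hpkst, -, hpkd⟩ := he.vars_eq_of_idle hjk hpidle
  obtain rfl : r = RRule.REF := by simpa [hpkst, hpEB, RStatus.Permits] using hr.permits
  have hjk' : j < k := by
    refine hjk.lt_of_ne fun hjk => ?_
    subst hjk
    simpa [hstEB] using hr.1.2.2 x hchild
  obtain hpidle' | ⟨k', hk', hk'j2, hexec'', -⟩ := idle_or_exists_first_execAt N e p (k+1) j2
  · exact hchild2 (by omega) hkj2 hpidle' (hr.2.2.2.trans hpkd) (.inr hr.2.1)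
  exact hseg.not_execAt_of_execRule_REF he (hchild.1.reachable.trans hxu) (hsj.trans hjk)
    (show k < k' by omega) (lt_of_le_of_lt (by exact_mod_cast (show k' ≤ j' by omega)) hj't)
    hr hexec''
termination_by j'
decreasing_by omega

theorem IsSegment.before_of_execRule (he : IsExec N e) (hseg : IsSegment N e u s t)
    {j j' : ℕ} {r r' : RRule} (hsj : s ≤ j) (hjj' : j < j') (hj't : (j' : ℕ∞) < t)
    (hr : ExecRule N (e j) (e (j+1)) u r) (hr' : ExecRule N (e j') (e (j'+1)) u r') :
    r.Before r' := by
  obtain hidle | ⟨k, hjk, hkj', ⟨rk, hrk⟩, hidle⟩ :=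
    idle_or_exists_first_execAt N e u (j+1) (j'+1)
  · exact absurd ⟨r', hr'⟩ (hidle j' (by omega) (by omega))
  have hkt : (k : ℕ∞) < t := lt_of_le_of_lt (by exact_mod_cast (show k ≤ j' by omega)) hj't
  have hREF : r ≠ RRule.REF := by
    rintro rfl
    exact hseg.not_execAt_of_execRule_REF he (.refl u) hsj (by omega) hkt hr ⟨rk, hrk⟩
  have hnext {r'' : RRule} (h : ExecRule N (e k) (e (k+1)) u r'') : r.Before r'' := by
    refine RRule.before_of_permits hREF ?_
    rw [← hr.st_post, ← (he.vars_eq_of_idle hjk hidle).1]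
    exact h.permits
  rcases (show k ≤ j' by omega).lt_or_eq with hkj' | rfl
  · exact (hnext hrk).trans (hseg.before_of_execRule he (by omega) hkj' hj't hrk hr')
  · exact hnext hr'
termination_by j' - j
decreasing_by omega

end Segment

theorem stmt8_general (N : Network V) (e : ℕ → Config V) (he : IsExec N e)
    (u : V) (s : ℕ) (t : ℕ∞) (hseg : IsSegment N e u s t)
    (m : ℕ) (τ : Fin m → ℕ) (ρ : Fin m → RRule)
    (hmono : StrictMono τ)
    (hin : ∀ i : Fin m, s ≤ τ i ∧ (τ i : ℕ∞) < t)
    (hexec : ∀ i : Fin m, ExecRule N (e (τ i)) (e (τ i + 1)) u (ρ i)) :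
    InRSPLang (List.ofFn ρ) :=
  inRSPLang_of_pairwise <| List.pairwise_ofFn.2 fun i i' hii' =>
    hseg.before_of_execRule he (hin i).1 (hmono hii') (hin i').2 (hexec i) (hexec i')

/-- within a single u-segment, the sequence of rules executed by a
non-root process u belongs to (R_I + ε)(R_R + ε)R_C*(R_EB + ε)(R_EF + ε). -/
theorem stmt8 (N : Network V) (e : ℕ → Config V) (he : IsExec N e)
    (u : V) (hu : u ≠ N.r) (s : ℕ) (t : ℕ∞) (hseg : IsSegment N e u s t)
    (m : ℕ) (τ : Fin m → ℕ) (ρ : Fin m → RRule)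
    (hmono : StrictMono τ)
    (hin : ∀ i : Fin m, s ≤ τ i ∧ (τ i : ℕ∞) < t)
    (hexec : ∀ i : Fin m, ExecRule N (e (τ i)) (e (τ i + 1)) u (ρ i)) :
    InRSPLang (List.ofFn ρ) :=
  stmt8_general N e he u s t hseg m τ ρ hmono hin hexec
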